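/- Suppose Ψ ∈ C²⁻([0,1]) satisfies Ψ(0) = 1 − θ, Ψ(1) = 1 and the OIDE min{ max{ −Ψ''(p), Ψ(p) − Φ_c[Ψ'](p) }, 2σh(p) − Ψ''(p) } = 0 for a.e. p ∈ [0,1]. Then the function Ḡ(p) = q(p) + (Ψ'(0) − Ψ'(p))/(2σ) belongs to 𝒢 and satisfies J(Ḡ) = sup_{G ∈ 𝒢} J(G). -/

import Mathlib

open MeasureTheory Set

/-- The mean-variance operator `ol` from the paper. -/
noncomputable def ol (σ θ k : ℝ) (q f : ℝ → ℝ) : ℝ :=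
  σ * (∫ t in (0:ℝ)..1, f t) ^ 2 - σ * (∫ t in (0:ℝ)..1, (f t) ^ 2)
    + 2 * σ * (∫ t in (0:ℝ)..1, q t * f t)
    + (θ - 2 * σ * (∫ t in (0:ℝ)..1, q t)) * (∫ t in (0:ℝ)..1, f t) + k

/-- Membership in the admissible class `𝒢`: `G(p) = ∫₀ᵖ g(t)dt` on `[0,1]`
for some measurable `g` with `0 ≤ g ≤ h` a.e. on `[0,1]`. -/
def InG (h G : ℝ → ℝ) : Prop :=
  ∃ g : ℝ → ℝ, Measurable g ∧
    (∀ᵐ t ∂(volume.restrict (Icc (0:ℝ) 1)), 0 ≤ g t ∧ g t ≤ h t) ∧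
    ∀ p ∈ Icc (0:ℝ) 1, G p = ∫ t in (0:ℝ)..p, g t

/-- The objective `J(G) = ∫_{[0,1]} u(ol(G) − G(1−p)) μ(dp)`. -/
noncomputable def J (σ θ k : ℝ) (q u : ℝ → ℝ) (μ : Measure ℝ) (G : ℝ → ℝ) : ℝ :=
  ∫ p in Icc (0:ℝ) 1, u (ol σ θ k q G - G (1 - p)) ∂μ

/-- The distribution function `Φ(p)` built from an optimal candidate `G`. -/
noncomputable def Phi (σ θ k : ℝ) (q u : ℝ → ℝ) (μ : Measure ℝ) (G : ℝ → ℝ) (p : ℝ) : ℝ :=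
  (∫ t in Ioc (1 - p) 1, deriv u (ol σ θ k q G - G (1 - t)) ∂μ) /
  (∫ t in Icc (0:ℝ) 1, deriv u (ol σ θ k q G - G (1 - t)) ∂μ)

/-- The function `Ψ` built from an optimal candidate `G`. -/
noncomputable def PsiOf (σ θ : ℝ) (q G : ℝ → ℝ) (p : ℝ) : ℝ :=
  (2 * σ * (∫ t in (0:ℝ)..1, G t) + θ - 2 * σ * (∫ t in (0:ℝ)..1, q t)) * (p - 1)
    + 2 * σ * (∫ t in p..(1:ℝ), (G t - q t)) + 1

/-- The nonlocal operator `Φ_c[f](p)`. -/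
noncomputable def PhiC (σ θ k : ℝ) (q u : ℝ → ℝ) (μ : Measure ℝ) (f : ℝ → ℝ) : ℝ → ℝ :=
  Phi σ θ k q u μ (fun s => q s + (f 0 - f s) / (2 * σ))

/-- `Ψ ∈ C²⁻([0,1])` with first derivative `Ψd` and a.e. second derivative `Ψdd`:
`Ψ` is differentiable on `[0,1]` with derivative `Ψd`, and `Ψd` is absolutely
continuous on `[0,1]` with a.e. derivative `Ψdd`. -/
def C2m (Ψ Ψd Ψdd : ℝ → ℝ) : Prop :=
  (∀ p ∈ Icc (0:ℝ) 1, HasDerivWithinAt Ψ (Ψd p) (Icc (0:ℝ) 1) p) ∧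
  IntegrableOn Ψdd (Icc (0:ℝ) 1) ∧
  (∀ p ∈ Icc (0:ℝ) 1, Ψd p = Ψd 0 + ∫ t in (0:ℝ)..p, Ψdd t)

lemma utang {u : ℝ → ℝ} (hc : ConcaveOn ℝ univ u) (hd : Differentiable ℝ u) (x y : ℝ) :
    u x ≤ u y + deriv u y * (x - y) := by
  rcases lt_trichotomy x y with hxy | rfl | hxy
  · have hs := hc.deriv_le_slope (mem_univ x) (mem_univ y) hxy (hd y)
    rw [slope_def_field] at hs
    have hden : (0:ℝ) < y - x := by linarith
    rw [le_div_iff₀ hden] at hs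
    nlinarith
  · simp
  · have hs := hc.slope_le_deriv (mem_univ y) (mem_univ x) hxy (hd y)
    rw [slope_def_field] at hs
    have hden : (0:ℝ) < x - y := by linarith
    rw [div_le_iff₀ hden] at hs
    nlinarith

lemma upos {u : ℝ → ℝ} (hc : ConcaveOn ℝ univ u) (hm : StrictMono u)
    (hd : Differentiable ℝ u) (y : ℝ) : 0 < deriv u y := by
  have := utang hc hd (y + 1) y
  have h2 : u y < u (y + 1) := hm (by linarith)
  nlinarith

lemma uanti {u : ℝ → ℝ} (hc : ConcaveOn ℝ univ u) (hd : Differentiable ℝ u) :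
    Antitone (deriv u) := by
  intro a b hab
  rcases eq_or_lt_of_le hab with rfl | hab
  · exact le_rfl
  · have h1 := utang hc hd a b
    have h2 := utang hc hd b a
    nlinarith

set_option maxHeartbeats 2000000 in
theorem stmt_11 (σ θ k : ℝ) (hσ : 0 < σ) (hθ : 0 ≤ θ)
    (q h : ℝ → ℝ)
    (hh_int : IntegrableOn h (Icc (0:ℝ) 1))
    (hh_nonneg : ∀ᵐ t ∂(volume.restrict (Icc (0:ℝ) 1)), 0 ≤ h t)
    (hq : ∀ p ∈ Icc (0:ℝ) 1, q p = ∫ t in (0:ℝ)..p, h t)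
    (m₀ : ℝ) (hm₀ : m₀ ∈ Ico (0:ℝ) 1)
    (hq0 : ∀ p ∈ Icc (0:ℝ) m₀, q p = 0)
    (hhpos : ∀ᵐ t ∂(volume.restrict (Ioo m₀ 1)), 0 < h t)
    (u : ℝ → ℝ) (hu_conc : ConcaveOn ℝ univ u) (hu_mono : StrictMono u)
    (hu_diff : Differentiable ℝ u)
    (μ : Measure ℝ) [IsProbabilityMeasure μ] (hμ0 : μ {0} = 0)
    (hμsupp : μ (Icc (0:ℝ) 1)ᶜ = 0)
    (Ψ Ψd Ψdd : ℝ → ℝ) (hC2 : C2m Ψ Ψd Ψdd)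
    (hΨ0 : Ψ 0 = 1 - θ) (hΨ1 : Ψ 1 = 1)
    (hOIDE : ∀ᵐ p ∂(volume.restrict (Icc (0:ℝ) 1)),
      min (max (-(Ψdd p)) (Ψ p - PhiC σ θ k q u μ Ψd p)) (2 * σ * h p - Ψdd p) = 0) :
    InG h (fun p => q p + (Ψd 0 - Ψd p) / (2 * σ)) ∧
      ∀ G : ℝ → ℝ, InG h G →
        J σ θ k q u μ G ≤ J σ θ k q u μ (fun p => q p + (Ψd 0 - Ψd p) / (2 * σ)) := by
  obtain ⟨hΨdiff, hΨdd_int, hΨd_eq⟩ := hC2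
  have h2σ : (0:ℝ) < 2 * σ := by linarith
  -- measurable representatives
  have hmh := hh_int.aestronglyMeasurable
  have hmf := hΨdd_int.aestronglyMeasurable
  set h1 : ℝ → ℝ := hmh.mk h with hh1def
  set f1 : ℝ → ℝ := hmf.mk Ψdd with hf1def
  have hh1m : Measurable h1 := hmh.stronglyMeasurable_mk.measurable
  have hf1m : Measurable f1 := hmf.stronglyMeasurable_mk.measurable
  have hh1ae : h =ᵐ[volume.restrict (Icc (0:ℝ) 1)] h1 := hmh.ae_eq_mk
  have hf1ae : Ψdd =ᵐ[volume.restrict (Icc (0:ℝ) 1)] f1 := hmf.ae_eq_mk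
  -- bounds on Ψdd from the OIDE
  have hbnd : ∀ᵐ t ∂(volume.restrict (Icc (0:ℝ) 1)), 0 ≤ Ψdd t ∧ Ψdd t ≤ 2 * σ * h t := by
    filter_upwards [hOIDE, hh_nonneg] with t ht hht
    have hb : 0 ≤ 2 * σ * h t := by positivity
    constructor
    · by_contra hlt
      push_neg at hlt
      have hmax : 0 < max (-(Ψdd t)) (Ψ t - PhiC σ θ k q u μ Ψd t) :=
        lt_of_lt_of_le (by linarith) (le_max_left _ _)
      rcases min_eq_iff.mp ht with ⟨h1', _⟩ | ⟨h1', _⟩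
      · linarith
      · linarith
    · have := min_le_right (max (-(Ψdd t)) (Ψ t - PhiC σ θ k q u μ Ψd t)) (2 * σ * h t - Ψdd t)
      rw [ht] at this
      linarith
  -- the candidate density
  set g0 : ℝ → ℝ := fun t => h1 t - f1 t / (2 * σ) with hg0def
  have hg0m : Measurable g0 := hh1m.sub (hf1m.div_const _)
  have hg0prop : ∀ᵐ t ∂(volume.restrict (Icc (0:ℝ) 1)),
      (0 ≤ g0 t ∧ g0 t ≤ h t) ∧ g0 t = h t - Ψdd t / (2 * σ) := by
    filter_upwards [hbnd, hh1ae, hf1ae] with t ⟨h0, h2⟩ e1 e2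
    have : g0 t = h t - Ψdd t / (2 * σ) := by simp [hg0def, ← e1, ← e2]
    refine ⟨⟨?_, ?_⟩, this⟩
    · rw [this]
      rw [sub_nonneg, div_le_iff₀ h2σ]
      linarith
    · rw [this]
      have : 0 ≤ Ψdd t / (2 * σ) := div_nonneg h0 (by linarith)
      linarith
  -- interval integrability helper
  have hIocsub : ∀ p ∈ Icc (0:ℝ) 1, Ioc (0:ℝ) p ⊆ Icc (0:ℝ) 1 := by
    intro p hp
    exact Ioc_subset_Icc_self.trans (Icc_subset_Icc le_rfl hp.2)
  have hII : ∀ f : ℝ → ℝ, IntegrableOn f (Icc (0:ℝ) 1) → ∀ p ∈ Icc (0:ℝ) 1,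
      IntervalIntegrable f volume 0 p := by
    intro f hf p hp
    rw [intervalIntegrable_iff_integrableOn_Ioc_of_le hp.1]
    exact hf.mono_set (hIocsub p hp)
  have hg0_int : IntegrableOn g0 (Icc (0:ℝ) 1) := by
    refine Integrable.mono' (hh_int.abs) hg0m.aestronglyMeasurable ?_
    filter_upwards [hg0prop] with t ⟨⟨h0, h2⟩, _⟩
    rw [Real.norm_eq_abs, abs_of_nonneg h0]
    exact h2.trans (le_abs_self _)
  -- the integral identity for g0
  have hg0glob : ∀ᵐ t ∂(volume : Measure ℝ), t ∈ Icc (0:ℝ) 1 →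
      g0 t = h t - Ψdd t / (2 * σ) := by
    rw [← ae_restrict_iff' measurableSet_Icc]
    filter_upwards [hg0prop] with t ht
    exact ht.2
  have hkey : ∀ p ∈ Icc (0:ℝ) 1,
      (∫ t in (0:ℝ)..p, g0 t) = (∫ t in (0:ℝ)..p, h t) - (∫ t in (0:ℝ)..p, Ψdd t) / (2 * σ) := by
    intro p hp
    have e1 : (∫ t in (0:ℝ)..p, g0 t) = ∫ t in (0:ℝ)..p, (h t - Ψdd t / (2 * σ)) := by
      apply intervalIntegral.integral_congr_ae
      filter_upwards [hg0glob] with t ht hmem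
      refine ht ?_
      rw [uIoc_of_le hp.1] at hmem
      exact hIocsub p hp hmem
    rw [e1, intervalIntegral.integral_sub (hII h hh_int p hp)
      ((hII Ψdd hΨdd_int p hp).div_const _), intervalIntegral.integral_div]
  have hmem1 : InG h (fun p => q p + (Ψd 0 - Ψd p) / (2 * σ)) := by
    refine ⟨g0, hg0m, ?_, ?_⟩
    · filter_upwards [hg0prop] with t ht using ht.1
    · intro p hp
      show q p + (Ψd 0 - Ψd p) / (2 * σ) = _
      rw [hkey p hp, hq p hp, hΨd_eq p hp]
      ring
  refine ⟨hmem1, ?_⟩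
  intro G hGmem
  obtain ⟨g, hg_meas, hg_ae, hG_eq⟩ := hGmem
  -- clamp function
  set cl : ℝ → ℝ := fun s => max 0 (min 1 s) with hcldef
  have hcl_cont : Continuous cl := continuous_const.max (continuous_const.min continuous_id)
  have hcl_mem : ∀ s, cl s ∈ Icc (0:ℝ) 1 := fun s =>
    ⟨le_max_left _ _, max_le zero_le_one (min_le_left _ _)⟩
  have hcl_eq : ∀ s ∈ Icc (0:ℝ) 1, cl s = s := by
    intro s hs
    simp only [hcldef]
    rw [min_eq_right hs.2, max_eq_right hs.1]
  -- integrability of g and d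
  have hg_int : IntegrableOn g (Icc (0:ℝ) 1) := by
    refine Integrable.mono' hh_int.abs hg_meas.aestronglyMeasurable ?_
    filter_upwards [hg_ae] with t ⟨h0, h2⟩
    rw [Real.norm_eq_abs, abs_of_nonneg h0]
    exact h2.trans (le_abs_self _)
  set d : ℝ → ℝ := fun t => g t - g0 t with hddef
  have hd_meas : Measurable d := hg_meas.sub hg0m
  have hd_int : IntegrableOn d (Icc (0:ℝ) 1) := hg_int.sub hg0_int
  -- clamped primitives
  have hprim : ∀ f : ℝ → ℝ, IntegrableOn f (Icc (0:ℝ) 1) →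
      Continuous (fun p => ∫ t in (0:ℝ)..(cl p), f t) := by
    intro f hf
    have h1 : ContinuousOn (fun x => ∫ t in (0:ℝ)..x, f t) (Icc (0:ℝ) 1) := by
      have h2 : IntegrableOn f (uIcc (0:ℝ) 1) := by rwa [uIcc_of_le zero_le_one]
      have := intervalIntegral.continuousOn_primitive_interval (a := (0:ℝ)) (b := 1) h2
      rwa [uIcc_of_le zero_le_one] at this
    exact h1.comp_continuous hcl_cont hcl_mem
  set Qc : ℝ → ℝ := fun p => ∫ t in (0:ℝ)..(cl p), h t with hQcdef
  set Rd : ℝ → ℝ := fun p => ∫ t in (0:ℝ)..(cl p), Ψdd t with hRddef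
  set Gc : ℝ → ℝ := fun p => ∫ t in (0:ℝ)..(cl p), g t with hGcdef
  set Dp : ℝ → ℝ := fun p => ∫ t in (0:ℝ)..(cl p), d t with hDpdef
  set Bc : ℝ → ℝ := fun p => Qc p - Rd p / (2 * σ) with hBcdef
  set Pd : ℝ → ℝ := fun p => Ψd 0 + Rd p with hPddef
  have hQc_cont : Continuous Qc := hprim h hh_int
  have hRd_cont : Continuous Rd := hprim Ψdd hΨdd_int
  have hGc_cont : Continuous Gc := hprim g hg_int
  have hDp_cont : Continuous Dp := hprim d hd_int
  have hBc_cont : Continuous Bc := hQc_cont.sub (hRd_cont.div_const _)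
  have hPd_cont : Continuous Pd := continuous_const.add hRd_cont
  -- pointwise identifications on Icc
  have hqQ : ∀ p ∈ Icc (0:ℝ) 1, q p = Qc p := by
    intro p hp
    rw [hq p hp]
    simp only [hQcdef, hcl_eq p hp]
  have hΨdP : ∀ p ∈ Icc (0:ℝ) 1, Ψd p = Pd p := by
    intro p hp
    rw [hΨd_eq p hp]
    simp only [hPddef, hRddef, hcl_eq p hp]
  have hBB : ∀ p ∈ Icc (0:ℝ) 1, q p + (Ψd 0 - Ψd p) / (2 * σ) = Bc p := by
    intro p hp
    rw [hq p hp, hΨd_eq p hp]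
    simp only [hBcdef, hQcdef, hRddef, hcl_eq p hp]
    ring
  have hGG : ∀ p ∈ Icc (0:ℝ) 1, G p = Gc p := by
    intro p hp
    rw [hG_eq p hp]
    simp only [hGcdef, hcl_eq p hp]
  have hDGB : ∀ p ∈ Icc (0:ℝ) 1, Dp p = Gc p - Bc p := by
    intro p hp
    have e1 : (∫ t in (0:ℝ)..p, d t) = (∫ t in (0:ℝ)..p, g t) - (∫ t in (0:ℝ)..p, g0 t) := by
      simp only [hddef]
      exact intervalIntegral.integral_sub (hII g hg_int p hp) (hII g0 hg0_int p hp)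
    simp only [hDpdef, hGcdef, hBcdef, hQcdef, hRddef, hcl_eq p hp]
    rw [e1, hkey p hp]
  -- ol congruence
  have hIccuIcc : uIcc (0:ℝ) 1 = Icc 0 1 := uIcc_of_le zero_le_one
  have holcong : ∀ (a b A B : ℝ → ℝ), (∀ p ∈ Icc (0:ℝ) 1, a p = A p) →
      (∀ p ∈ Icc (0:ℝ) 1, b p = B p) → ol σ θ k a b = ol σ θ k A B := by
    intro a b A B ha hb
    have e1 : (∫ t in (0:ℝ)..1, b t) = ∫ t in (0:ℝ)..1, B t :=
      intervalIntegral.integral_congr (fun t ht => hb t (hIccuIcc ▸ ht))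
    have e2 : (∫ t in (0:ℝ)..1, (b t)^2) = ∫ t in (0:ℝ)..1, (B t)^2 :=
      intervalIntegral.integral_congr (fun t ht => by rw [hb t (hIccuIcc ▸ ht)])
    have e3 : (∫ t in (0:ℝ)..1, a t * b t) = ∫ t in (0:ℝ)..1, A t * B t :=
      intervalIntegral.integral_congr
        (fun t ht => by rw [ha t (hIccuIcc ▸ ht), hb t (hIccuIcc ▸ ht)])
    have e4 : (∫ t in (0:ℝ)..1, a t) = ∫ t in (0:ℝ)..1, A t :=
      intervalIntegral.integral_congr (fun t ht => ha t (hIccuIcc ▸ ht))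
    simp only [ol, e1, e2, e3, e4]
  set cG := ol σ θ k Qc Gc with hcGdef
  set cB := ol σ θ k Qc Bc with hcBdef
  have holG : ol σ θ k q G = cG := holcong q G Qc Gc hqQ hGG
  have holB : ol σ θ k q (fun p => q p + (Ψd 0 - Ψd p) / (2 * σ)) = cB :=
    holcong _ _ Qc Bc hqQ hBB
  -- the function lam
  set lam : ℝ → ℝ := fun t => deriv u (cB - Bc (1 - t)) with hlamdef
  have hlam_meas : Measurable lam :=
    (measurable_deriv u).comp
      (continuous_const.sub (hBc_cont.comp (continuous_const.sub continuous_id))).measurable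
  have hlam_pos : ∀ t, 0 < lam t := fun t => upos hu_conc hu_mono hu_diff _
  -- global bound on Bc via clamping
  obtain ⟨CB, hCB⟩ :=
    (isCompact_Icc (a := (0:ℝ)) (b := 1)).exists_bound_of_continuousOn hBc_cont.continuousOn
  have hclcl : ∀ s, cl (cl s) = cl s := fun s => hcl_eq _ (hcl_mem s)
  have hBc_glob : ∀ s, |Bc s| ≤ CB := by
    intro s
    have : Bc s = Bc (cl s) := by
      simp only [hBcdef, hQcdef, hRddef, hclcl]
    rw [this, ← Real.norm_eq_abs]
    exact hCB _ (hcl_mem s)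
  set εl : ℝ := deriv u (cB + CB) with hεdef
  set Cl : ℝ := deriv u (cB - CB) with hCldef
  have hεpos : 0 < εl := upos hu_conc hu_mono hu_diff _
  have hClpos : 0 < Cl := upos hu_conc hu_mono hu_diff _
  have hlam_bnd : ∀ t, εl ≤ lam t ∧ lam t ≤ Cl := by
    intro t
    have hb := hBc_glob (1 - t)
    rw [abs_le] at hb
    constructor
    · exact uanti hu_conc hu_diff (by linarith : cB - Bc (1 - t) ≤ cB + CB)
    · exact uanti hu_conc hu_diff (by linarith : cB - CB ≤ cB - Bc (1 - t))
  have hlam_intg : Integrable lam μ := by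
    refine Integrable.mono' (integrable_const Cl) hlam_meas.aestronglyMeasurable ?_
    filter_upwards with t
    rw [Real.norm_eq_abs, abs_of_pos (hlam_pos t)]
    exact (hlam_bnd t).2
  set Λ : ℝ := ∫ t in Icc (0:ℝ) 1, lam t ∂μ with hΛdef
  set F : ℝ → ℝ := fun s => ∫ t in Ioc (1 - s) 1, lam t ∂μ with hFdef
  have hμIcc : μ (Icc (0:ℝ) 1) = 1 := by
    have h2 := measure_add_measure_compl (μ := μ) (measurableSet_Icc (a := (0:ℝ)) (b := 1))
    rw [hμsupp, add_zero, measure_univ] at h2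
    exact h2
  have hΛpos : 0 < Λ := by
    have hconst : (∫ _ in Icc (0:ℝ) 1, εl ∂μ) = εl := by
      rw [setIntegral_const, measureReal_def, hμIcc]
      simp
    have hmono : (∫ _ in Icc (0:ℝ) 1, εl ∂μ) ≤ Λ :=
      setIntegral_mono_on (integrable_const εl) hlam_intg.integrableOn measurableSet_Icc
        (fun t _ => (hlam_bnd t).1)
    rw [hconst] at hmono
    linarith
  have hΛne : Λ ≠ 0 := ne_of_gt hΛpos
  -- F : monotone, bounded
  have hF_mono : Monotone F := by
    intro a b hab
    apply setIntegral_mono_set hlam_intg.integrableOn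
    · filter_upwards with t using (hlam_pos t).le
    · exact HasSubset.Subset.eventuallyLE (Ioc_subset_Ioc (by linarith) le_rfl)
  have hF_meas : Measurable F := hF_mono.measurable
  have hF_nonneg : ∀ s, 0 ≤ F s := fun s =>
    setIntegral_nonneg measurableSet_Ioc (fun t _ => (hlam_pos t).le)
  have hF_le : ∀ s, F s ≤ Cl := by
    intro s
    have h1 : F s ≤ ∫ _ in Ioc (1 - s) 1, Cl ∂μ :=
      setIntegral_mono_on hlam_intg.integrableOn (integrable_const Cl) measurableSet_Ioc
        (fun t _ => (hlam_bnd t).2)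
    have h2 : (∫ _ in Ioc (1 - s) 1, Cl ∂μ) = (μ (Ioc (1 - s) 1)).toReal * Cl := by
      rw [setIntegral_const]
      simp [smul_eq_mul, measureReal_def]
    have h3 : (μ (Ioc (1 - s) 1)).toReal ≤ 1 := by
      have := prob_le_one (μ := μ) (s := Ioc (1 - s) 1)
      exact ENNReal.toReal_mono ENNReal.one_ne_top this |>.trans (by simp)
    nlinarith
  -- identification of PhiC with F/Λ on Icc
  have hPhiC : ∀ p ∈ Icc (0:ℝ) 1, PhiC σ θ k q u μ Ψd p = F p / Λ := by
    intro p hp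
    have hBfun : ∀ t ∈ Icc (0:ℝ) 1,
        deriv u (ol σ θ k q (fun s => q s + (Ψd 0 - Ψd s) / (2 * σ)) -
          (q (1 - t) + (Ψd 0 - Ψd (1 - t)) / (2 * σ))) = lam t := by
      intro t ht
      have h1t : (1:ℝ) - t ∈ Icc (0:ℝ) 1 := ⟨by linarith [ht.2], by linarith [ht.1]⟩
      rw [holB, hBB _ h1t]
    have hnum : (∫ t in Ioc (1 - p) 1,
        deriv u (ol σ θ k q (fun s => q s + (Ψd 0 - Ψd s) / (2 * σ)) -
          (q (1 - t) + (Ψd 0 - Ψd (1 - t)) / (2 * σ))) ∂μ) = F p := by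
      apply setIntegral_congr_fun measurableSet_Ioc
      intro t ht
      exact hBfun t ⟨le_trans (by linarith [hp.2]) ht.1.le, ht.2⟩
    have hden : (∫ t in Icc (0:ℝ) 1,
        deriv u (ol σ θ k q (fun s => q s + (Ψd 0 - Ψd s) / (2 * σ)) -
          (q (1 - t) + (Ψd 0 - Ψd (1 - t)) / (2 * σ))) ∂μ) = Λ := by
      apply setIntegral_congr_fun measurableSet_Icc
      intro t ht
      exact hBfun t ht
    simp only [PhiC, Phi]
    rw [hnum, hden]
  -- J congruences
  have hintu : ∀ (c : ℝ) (W : ℝ → ℝ), Continuous W →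
      IntegrableOn (fun p => u (c - W (1 - p))) (Icc (0:ℝ) 1) μ := by
    intro c W hW
    apply ContinuousOn.integrableOn_compact isCompact_Icc
    exact (hu_diff.continuous.comp
      (continuous_const.sub (hW.comp (continuous_const.sub continuous_id)))).continuousOn
  have hJG : J σ θ k q u μ G = ∫ p in Icc (0:ℝ) 1, u (cG - Gc (1 - p)) ∂μ := by
    apply setIntegral_congr_fun measurableSet_Icc
    intro p hp
    have h1p : (1:ℝ) - p ∈ Icc (0:ℝ) 1 := ⟨by linarith [hp.2], by linarith [hp.1]⟩
    simp only [holG, hGG _ h1p]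
  have hJB : J σ θ k q u μ (fun p => q p + (Ψd 0 - Ψd p) / (2 * σ))
      = ∫ p in Icc (0:ℝ) 1, u (cB - Bc (1 - p)) ∂μ := by
    apply setIntegral_congr_fun measurableSet_Icc
    intro p hp
    have h1p : (1:ℝ) - p ∈ Icc (0:ℝ) 1 := ⟨by linarith [hp.2], by linarith [hp.1]⟩
    simp only [holB, hBB _ h1p]
  -- global bound for Dp
  obtain ⟨CD, hCD⟩ :=
    (isCompact_Icc (a := (0:ℝ)) (b := 1)).exists_bound_of_continuousOn hDp_cont.continuousOn
  have hDp_glob : ∀ s, |Dp s| ≤ CD := by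
    intro s
    have : Dp s = Dp (cl s) := by simp only [hDpdef, hclcl]
    rw [this, ← Real.norm_eq_abs]
    exact hCD _ (hcl_mem s)
  have hCD0 : 0 ≤ CD := le_trans (abs_nonneg _) (hDp_glob 0)
  -- tangent-line comparison
  have hint3 : IntegrableOn (fun p => lam p * ((cG - cB) - Dp (1 - p))) (Icc (0:ℝ) 1) μ := by
    refine Integrable.mono' (integrable_const (Cl * (|cG - cB| + CD)))
      ((hlam_meas.mul ((continuous_const.sub
        (hDp_cont.comp (continuous_const.sub continuous_id))).measurable)).aestronglyMeasurable) ?_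
    filter_upwards with t
    rw [Real.norm_eq_abs, abs_mul, abs_of_pos (hlam_pos t)]
    have h1 : |cG - cB - Dp (1 - t)| ≤ |cG - cB| + CD :=
      (abs_sub _ _).trans (by linarith [hDp_glob (1 - t)])
    have h2 := (hlam_bnd t).2
    nlinarith [hlam_pos t, abs_nonneg (cG - cB - Dp (1 - t))]
  have hstep3 : (∫ p in Icc (0:ℝ) 1, u (cG - Gc (1 - p)) ∂μ)
      - (∫ p in Icc (0:ℝ) 1, u (cB - Bc (1 - p)) ∂μ)
      ≤ ∫ p in Icc (0:ℝ) 1, lam p * ((cG - cB) - Dp (1 - p)) ∂μ := by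
    rw [← integral_sub (hintu cG Gc hGc_cont) (hintu cB Bc hBc_cont)]
    apply setIntegral_mono_on
      ((hintu cG Gc hGc_cont).sub (hintu cB Bc hBc_cont)) hint3 measurableSet_Icc
    intro p hp
    have h1p : (1:ℝ) - p ∈ Icc (0:ℝ) 1 := ⟨by linarith [hp.2], by linarith [hp.1]⟩
    have htan := utang hu_conc hu_diff (cG - Gc (1 - p)) (cB - Bc (1 - p))
    have hDval : Dp (1 - p) = Gc (1 - p) - Bc (1 - p) := hDGB _ h1p
    have hlamval : lam p = deriv u (cB - Bc (1 - p)) := rfl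
    rw [hlamval]
    rw [hDval]
    have e : cG - cB - (Gc (1 - p) - Bc (1 - p))
        = (cG - Gc (1 - p)) - (cB - Bc (1 - p)) := by ring
    rw [e]
    simp only [Pi.sub_apply]
    linarith [htan]
  have hint4 : IntegrableOn (fun p => lam p * Dp (1 - p)) (Icc (0:ℝ) 1) μ := by
    refine Integrable.mono' (integrable_const (Cl * CD))
      ((hlam_meas.mul ((hDp_cont.comp (continuous_const.sub continuous_id)).measurable)).aestronglyMeasurable) ?_
    filter_upwards with t
    rw [Real.norm_eq_abs, abs_mul, abs_of_pos (hlam_pos t)]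
    have h2 := (hlam_bnd t).2
    nlinarith [hlam_pos t, hDp_glob (1 - t), abs_nonneg (Dp (1 - t))]
  have hstep4 : (∫ p in Icc (0:ℝ) 1, lam p * ((cG - cB) - Dp (1 - p)) ∂μ)
      = (cG - cB) * Λ - ∫ p in Icc (0:ℝ) 1, lam p * Dp (1 - p) ∂μ := by
    have e : (fun p => lam p * ((cG - cB) - Dp (1 - p)))
        = fun p => (cG - cB) * lam p - lam p * Dp (1 - p) := by
      funext p
      ring
    rw [e, integral_sub (hlam_intg.integrableOn.const_mul _) hint4, integral_const_mul]
  -- FTC for Ψ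
  have hΨ_contOn : ContinuousOn Ψ (Icc (0:ℝ) 1) := fun p hp => (hΨdiff p hp).continuousWithinAt
  have hFTC : ∀ s ∈ Icc (0:ℝ) 1, (∫ t in s..1, Ψd t) = Ψ 1 - Ψ s := by
    intro s hs
    have hs1 : s ≤ 1 := hs.2
    have hcont : ContinuousOn Ψ (Icc s 1) := hΨ_contOn.mono (Icc_subset_Icc hs.1 le_rfl)
    have hderiv : ∀ x ∈ Ioo s 1, HasDerivWithinAt Ψ (Ψd x) (Ioi x) x := by
      intro x hx
      have hx' : x ∈ Icc (0:ℝ) 1 := ⟨hs.1.trans hx.1.le, hx.2.le⟩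
      exact (hΨdiff x hx').mono_of_mem_nhdsWithin
        (Icc_mem_nhdsGT_of_mem ⟨hs.1.trans hx.1.le, hx.2⟩)
    have hii : IntervalIntegrable Ψd volume s 1 := by
      rw [intervalIntegrable_iff_integrableOn_Ioc_of_le hs1]
      have h1 : IntegrableOn Pd (Ioc s 1) := hPd_cont.integrableOn_Ioc
      exact h1.congr_fun
        (fun t ht => (hΨdP t ⟨hs.1.trans ht.1.le, ht.2⟩).symm) measurableSet_Ioc
    exact intervalIntegral.integral_eq_sub_of_hasDeriv_right_of_le hs1 hcont hderiv hii
  -- the integral of Pd over [0,1] is θ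
  have hIPd : (∫ t in (0:ℝ)..1, Pd t) = θ := by
    have e1 : (∫ t in (0:ℝ)..1, Pd t) = ∫ t in (0:ℝ)..1, Ψd t :=
      intervalIntegral.integral_congr (fun t ht => (hΨdP t (hIccuIcc ▸ ht)).symm)
    rw [e1, hFTC 0 ⟨le_rfl, zero_le_one⟩, hΨ1, hΨ0]
    ring
  -- interval integrability of continuous functions
  have hiiC : ∀ W : ℝ → ℝ, Continuous W → IntervalIntegrable W volume 0 1 :=
    fun W hW => hW.intervalIntegrable 0 1
  -- expansion identities
  have eD : (∫ t in (0:ℝ)..1, Gc t) = (∫ t in (0:ℝ)..1, Bc t) + ∫ t in (0:ℝ)..1, Dp t := by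
    rw [← intervalIntegral.integral_add (hiiC Bc hBc_cont) (hiiC Dp hDp_cont)]
    exact intervalIntegral.integral_congr (fun t ht => by
      have := hDGB t (hIccuIcc ▸ ht)
      linarith)
  have eSq : (∫ t in (0:ℝ)..1, (Gc t)^2) = (∫ t in (0:ℝ)..1, (Bc t)^2)
      + (2 * (∫ t in (0:ℝ)..1, Bc t * Dp t) + ∫ t in (0:ℝ)..1, (Dp t)^2) := by
    rw [← intervalIntegral.integral_const_mul]
    rw [← intervalIntegral.integral_add ((hiiC (fun t => Bc t * Dp t) (hBc_cont.mul hDp_cont)).const_mul 2)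
      (hiiC (fun t => Dp t ^ 2) (hDp_cont.pow 2))]
    rw [← intervalIntegral.integral_add (hiiC (fun t => Bc t ^ 2) (hBc_cont.pow 2))
      (((hiiC (fun t => Bc t * Dp t) (hBc_cont.mul hDp_cont)).const_mul 2).add (hiiC (fun t => Dp t ^ 2) (hDp_cont.pow 2)))]
    exact intervalIntegral.integral_congr (fun t ht => by
      have e2 : Gc t = Bc t + Dp t := by have := hDGB t (hIccuIcc ▸ ht); linarith
      rw [e2]; ring)
  have eQ : (∫ t in (0:ℝ)..1, Qc t * Gc t) = (∫ t in (0:ℝ)..1, Qc t * Bc t)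
      + ∫ t in (0:ℝ)..1, Qc t * Dp t := by
    rw [← intervalIntegral.integral_add (hiiC (fun t => Qc t * Bc t) (hQc_cont.mul hBc_cont))
      (hiiC (fun t => Qc t * Dp t) (hQc_cont.mul hDp_cont))]
    exact intervalIntegral.integral_congr (fun t ht => by
      have e2 : Gc t = Bc t + Dp t := by have := hDGB t (hIccuIcc ▸ ht); linarith
      rw [e2]; ring)
  -- Pd * Dp expansion
  have ePD : (∫ t in (0:ℝ)..1, Pd t * Dp t)
      = Ψd 0 * (∫ t in (0:ℝ)..1, Dp t)
        + 2 * σ * (∫ t in (0:ℝ)..1, Qc t * Dp t) - 2 * σ * (∫ t in (0:ℝ)..1, Bc t * Dp t) := by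
    have e0 : ∀ t, Pd t * Dp t
        = Ψd 0 * Dp t + 2 * σ * (Qc t * Dp t) - 2 * σ * (Bc t * Dp t) := by
      intro t
      have hRdt : Rd t = 2 * σ * (Qc t - Bc t) := by
        simp only [hBcdef]
        field_simp
        ring
      simp only [hPddef]
      rw [hRdt]
      ring
    simp only [e0]
    rw [intervalIntegral.integral_sub
      (((hiiC _ hDp_cont).const_mul _).add ((hiiC (fun t => Qc t * Dp t) (hQc_cont.mul hDp_cont)).const_mul _))
      ((hiiC (fun t => Bc t * Dp t) (hBc_cont.mul hDp_cont)).const_mul _)]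
    rw [intervalIntegral.integral_add ((hiiC _ hDp_cont).const_mul _)
      ((hiiC (fun t => Qc t * Dp t) (hQc_cont.mul hDp_cont)).const_mul _)]
    rw [intervalIntegral.integral_const_mul, intervalIntegral.integral_const_mul,
      intervalIntegral.integral_const_mul]
  -- theta in terms of Rd
  have hIRd : (∫ t in (0:ℝ)..1, Rd t) = θ - Ψd 0 := by
    have e1 : (∫ t in (0:ℝ)..1, Pd t) = Ψd 0 + ∫ t in (0:ℝ)..1, Rd t := by
      simp only [hPddef]
      rw [intervalIntegral.integral_add intervalIntegrable_const (hiiC _ hRd_cont),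
        intervalIntegral.integral_const]
      simp
    rw [hIPd] at e1
    linarith
  have hIB : (∫ t in (0:ℝ)..1, Bc t)
      = (∫ t in (0:ℝ)..1, Qc t) - (∫ t in (0:ℝ)..1, Rd t) / (2 * σ) := by
    simp only [hBcdef]
    rw [intervalIntegral.integral_sub (hiiC _ hQc_cont) ((hiiC _ hRd_cont).div_const _),
      intervalIntegral.integral_div]
  -- Cauchy-Schwarz
  have hCS : (∫ t in (0:ℝ)..1, Dp t)^2 ≤ ∫ t in (0:ℝ)..1, (Dp t)^2 := by
    set ID := ∫ t in (0:ℝ)..1, Dp t with hIDdef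
    have h0 : 0 ≤ ∫ t in (0:ℝ)..1, (Dp t - ID)^2 :=
      intervalIntegral.integral_nonneg zero_le_one (fun t _ => sq_nonneg _)
    have h1 : (∫ t in (0:ℝ)..1, (Dp t - ID)^2)
        = (∫ t in (0:ℝ)..1, (Dp t)^2) - 2 * ID * ID + ID^2 := by
      have e0 : ∀ t, (Dp t - ID)^2 = (Dp t)^2 - (2 * ID) * Dp t + ID^2 := fun t => by ring
      simp only [e0]
      rw [intervalIntegral.integral_add
        ((hiiC (fun t => Dp t ^ 2) (hDp_cont.pow 2)).sub ((hiiC _ hDp_cont).const_mul _))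
        intervalIntegrable_const]
      rw [intervalIntegral.integral_sub (hiiC (fun t => Dp t ^ 2) (hDp_cont.pow 2))
        ((hiiC _ hDp_cont).const_mul _)]
      rw [intervalIntegral.integral_const_mul, intervalIntegral.integral_const]
      simp only [smul_eq_mul]
      ring
    nlinarith
  -- step 5 : cG - cB ≤ ∫ Pd * Dp
  have hstep5 : cG - cB ≤ ∫ t in (0:ℝ)..1, Pd t * Dp t := by
    have hkey5 : cG - cB
        = σ * ((∫ t in (0:ℝ)..1, Dp t)^2 - (∫ t in (0:ℝ)..1, (Dp t)^2))
          + ∫ t in (0:ℝ)..1, Pd t * Dp t := by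
      have hθeq : θ = Ψd 0 - 2 * σ * (∫ t in (0:ℝ)..1, Bc t)
          + 2 * σ * (∫ t in (0:ℝ)..1, Qc t) := by
        rw [hIB]
        field_simp
        linarith [hIRd]
      simp only [hcGdef, hcBdef, ol]
      rw [eD, eSq, eQ, ePD, hθeq]
      ring
    have hσterm : σ * ((∫ t in (0:ℝ)..1, Dp t)^2 - (∫ t in (0:ℝ)..1, (Dp t)^2)) ≤ 0 :=
      mul_nonpos_of_nonneg_of_nonpos hσ.le (by linarith [hCS])
    linarith
  -- continuous representative of Ψ
  set Ψc : ℝ → ℝ := fun p => Ψ (cl p) with hΨcdef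
  have hΨc_cont : Continuous Ψc := hΨ_contOn.comp_continuous hcl_cont hcl_mem
  obtain ⟨CΨ, hCΨ⟩ :=
    (isCompact_Icc (a := (0:ℝ)) (b := 1)).exists_bound_of_continuousOn hΨ_contOn
  have hΨc_glob : ∀ s, |Ψc s| ≤ CΨ := fun s => by
    rw [hΨcdef, ← Real.norm_eq_abs]
    exact hCΨ _ (hcl_mem s)
  -- global bound for Pd
  obtain ⟨CP, hCP⟩ :=
    (isCompact_Icc (a := (0:ℝ)) (b := 1)).exists_bound_of_continuousOn hPd_cont.continuousOn
  have hPd_glob : ∀ s, |Pd s| ≤ CP := by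
    intro s
    have : Pd s = Pd (cl s) := by simp only [hPddef, hRddef, hclcl]
    rw [this, ← Real.norm_eq_abs]
    exact hCP _ (hcl_mem s)
  have hCP0 : 0 ≤ CP := le_trans (abs_nonneg _) (hPd_glob 0)
  have hd_int' : Integrable d (volume.restrict (Ioc (0:ℝ) 1)) :=
    hd_int.mono_set Ioc_subset_Icc_self
  -- Fubini A
  set Kf : ℝ × ℝ → ℝ := fun z => if z.2 ≤ z.1 then Pd z.1 * d z.2 else 0 with hKfdef
  have hKf_meas : Measurable Kf := by
    have hset : MeasurableSet {z : ℝ × ℝ | z.2 ≤ z.1} :=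
      measurableSet_le measurable_snd measurable_fst
    exact Measurable.ite hset
      ((hPd_cont.measurable.comp measurable_fst).mul (hd_meas.comp measurable_snd))
      measurable_const
  have hKf_int : Integrable Kf
      ((volume.restrict (Ioc (0:ℝ) 1)).prod (volume.restrict (Ioc (0:ℝ) 1))) := by
    refine Integrable.mono' ((integrable_const CP).mul_prod hd_int'.abs)
      hKf_meas.aestronglyMeasurable ?_
    filter_upwards with z
    rw [Real.norm_eq_abs]
    simp only [hKfdef]
    split_ifs
    · rw [abs_mul]
      exact mul_le_mul_of_nonneg_right (hPd_glob _) (abs_nonneg _)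
    · simp only [abs_zero]
      positivity
  have hswapA := MeasureTheory.integral_integral_swap (μ := volume.restrict (Ioc (0:ℝ) 1))
    (ν := volume.restrict (Ioc (0:ℝ) 1)) (f := fun x y => Kf (x, y)) hKf_int
  have hLA : ∀ t ∈ Ioc (0:ℝ) 1,
      (∫ s in Ioc (0:ℝ) 1, Kf (t, s)) = Pd t * Dp t := by
    intro t ht
    have htI : t ∈ Icc (0:ℝ) 1 := Ioc_subset_Icc_self ht
    have e : ∀ s, Kf (t, s) = Pd t * (Iic t).indicator d s := by
      intro s
      simp only [hKfdef, indicator_apply, mem_Iic]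
      split_ifs <;> simp
    simp_rw [e]
    rw [integral_const_mul, setIntegral_indicator measurableSet_Iic]
    rw [Ioc_inter_Iic, min_eq_right ht.2]
    have hDt : Dp t = ∫ s in Ioc (0:ℝ) t, d s := by
      simp only [hDpdef, hcl_eq t htI]
      rw [intervalIntegral.integral_of_le ht.1.le]
    rw [hDt]
  have hRA : ∀ s ∈ Ioc (0:ℝ) 1,
      (∫ t in Ioc (0:ℝ) 1, Kf (t, s)) = (1 - Ψc s) * d s := by
    intro s hs
    have hsI : s ∈ Icc (0:ℝ) 1 := Ioc_subset_Icc_self hs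
    have e : ∀ t, Kf (t, s) = (Ici s).indicator Pd t * d s := by
      intro t
      simp only [hKfdef, indicator_apply, mem_Ici]
      split_ifs <;> simp
    simp_rw [e]
    rw [integral_mul_const, setIntegral_indicator measurableSet_Ici]
    have hset : Ioc (0:ℝ) 1 ∩ Ici s = Icc s 1 := by
      ext x
      simp only [mem_inter_iff, mem_Ioc, mem_Ici, mem_Icc]
      constructor
      · rintro ⟨⟨_, hx2⟩, hx3⟩
        exact ⟨hx3, hx2⟩
      · rintro ⟨hx1, hx2⟩
        exact ⟨⟨lt_of_lt_of_le hs.1 hx1, hx2⟩, hx1⟩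
    rw [hset]
    have hIcc : (∫ t in Icc s 1, Pd t) = 1 - Ψc s := by
      rw [integral_Icc_eq_integral_Ioc, ← intervalIntegral.integral_of_le hs.2]
      have e1 : (∫ t in s..1, Pd t) = ∫ t in s..1, Ψd t :=
        intervalIntegral.integral_congr (fun t ht => by
          rw [uIcc_of_le hs.2] at ht
          exact (hΨdP t ⟨hs.1.le.trans ht.1, ht.2⟩).symm)
      rw [e1, hFTC s hsI, hΨ1]
      simp only [hΨcdef, hcl_eq s hsI]
    rw [hIcc]
  have hΨcd_int : Integrable (fun s => Ψc s * d s) (volume.restrict (Ioc (0:ℝ) 1)) := by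
    refine Integrable.mono' (hd_int'.abs.const_mul CΨ)
      ((hΨc_cont.measurable.mul hd_meas).aestronglyMeasurable) ?_
    filter_upwards with s
    rw [Real.norm_eq_abs, abs_mul]
    exact mul_le_mul_of_nonneg_right (hΨc_glob s) (abs_nonneg _)
  have hD1 : (∫ s in Ioc (0:ℝ) 1, d s) = Dp 1 := by
    simp only [hDpdef, hcl_eq 1 ⟨zero_le_one, le_rfl⟩]
    rw [intervalIntegral.integral_of_le zero_le_one]
  have hstep6 : (∫ t in (0:ℝ)..1, Pd t * Dp t)
      = Dp 1 - ∫ s in Ioc (0:ℝ) 1, Ψc s * d s := by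
    rw [intervalIntegral.integral_of_le zero_le_one]
    rw [← setIntegral_congr_fun measurableSet_Ioc hLA]
    rw [hswapA]
    rw [setIntegral_congr_fun measurableSet_Ioc hRA]
    have e : (fun s => (1 - Ψc s) * d s) = fun s => d s - Ψc s * d s := by
      funext s
      ring
    rw [e, integral_sub hd_int' hΨcd_int, hD1]
  -- Fubini B
  set Kg : ℝ × ℝ → ℝ := fun z => if z.1 + z.2 ≤ 1 then lam z.1 * d z.2 else 0 with hKgdef
  have hKg_meas : Measurable Kg := by
    have hset : MeasurableSet {z : ℝ × ℝ | z.1 + z.2 ≤ 1} :=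
      measurableSet_le (measurable_fst.add measurable_snd) measurable_const
    exact Measurable.ite hset
      ((hlam_meas.comp measurable_fst).mul (hd_meas.comp measurable_snd))
      measurable_const
  have hKg_int : Integrable Kg
      ((μ.restrict (Icc (0:ℝ) 1)).prod (volume.restrict (Ioc (0:ℝ) 1))) := by
    refine Integrable.mono' ((integrable_const Cl).mul_prod hd_int'.abs)
      hKg_meas.aestronglyMeasurable ?_
    filter_upwards with z
    rw [Real.norm_eq_abs]
    simp only [hKgdef]
    split_ifs
    · rw [abs_mul, abs_of_pos (hlam_pos _)]
      exact mul_le_mul_of_nonneg_right (hlam_bnd _).2 (abs_nonneg _)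
    · simp only [abs_zero]
      positivity
  have hswapB := MeasureTheory.integral_integral_swap (μ := μ.restrict (Icc (0:ℝ) 1))
    (ν := volume.restrict (Ioc (0:ℝ) 1)) (f := fun x y => Kg (x, y)) hKg_int
  have hLB : ∀ p ∈ Icc (0:ℝ) 1,
      (∫ s in Ioc (0:ℝ) 1, Kg (p, s)) = lam p * Dp (1 - p) := by
    intro p hp
    have h1p : (1:ℝ) - p ∈ Icc (0:ℝ) 1 := ⟨by linarith [hp.2], by linarith [hp.1]⟩
    have e : ∀ s, Kg (p, s) = lam p * (Iic (1 - p)).indicator d s := by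
      intro s
      simp only [hKgdef, indicator_apply, mem_Iic]
      split_ifs with h1 h2 <;> first | rfl | (exfalso; linarith) | simp
    simp_rw [e]
    rw [integral_const_mul, setIntegral_indicator measurableSet_Iic]
    rw [Ioc_inter_Iic, min_eq_right h1p.2]
    have hDt : Dp (1 - p) = ∫ s in Ioc (0:ℝ) (1 - p), d s := by
      simp only [hDpdef, hcl_eq _ h1p]
      rw [intervalIntegral.integral_of_le h1p.1]
    rw [hDt]
  have hRB : ∀ s ∈ Ioc (0:ℝ) 1,
      (∫ p in Icc (0:ℝ) 1, Kg (p, s) ∂μ) = (Λ - F s) * d s := by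
    intro s hs
    have h1s : (1:ℝ) - s ∈ Icc (0:ℝ) 1 := ⟨by linarith [hs.2], by linarith [hs.1]⟩
    have e : ∀ p, Kg (p, s) = (Iic (1 - s)).indicator lam p * d s := by
      intro p
      simp only [hKgdef, indicator_apply, mem_Iic]
      split_ifs with h1 h2 <;> first | rfl | (exfalso; linarith) | simp
    simp_rw [e]
    rw [integral_mul_const, setIntegral_indicator measurableSet_Iic]
    have hset : Icc (0:ℝ) 1 ∩ Iic (1 - s) = Icc 0 (1 - s) := by
      ext x
      simp only [mem_inter_iff, mem_Icc, mem_Iic]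
      constructor
      · rintro ⟨⟨hx1, _⟩, hx3⟩
        exact ⟨hx1, hx3⟩
      · rintro ⟨hx1, hx2⟩
        exact ⟨⟨hx1, by linarith [hs.1]⟩, hx2⟩
    rw [hset]
    have hsplit : Λ = (∫ p in Icc (0:ℝ) (1 - s), lam p ∂μ) + F s := by
      rw [hΛdef, hFdef]
      rw [← Icc_union_Ioc_eq_Icc h1s.1 h1s.2]
      rw [setIntegral_union ?hdisj measurableSet_Ioc
        hlam_intg.integrableOn hlam_intg.integrableOn]
      case hdisj =>
        rw [disjoint_left]
        rintro x ⟨_, hx2⟩ ⟨hx3, _⟩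
        linarith
    have : (∫ p in Icc (0:ℝ) (1 - s), lam p ∂μ) = Λ - F s := by linarith
    rw [this]
  have hFd_int : Integrable (fun s => F s * d s) (volume.restrict (Ioc (0:ℝ) 1)) := by
    refine Integrable.mono' (hd_int'.abs.const_mul Cl)
      ((hF_meas.mul hd_meas).aestronglyMeasurable) ?_
    filter_upwards with s
    rw [Real.norm_eq_abs, abs_mul, abs_of_nonneg (hF_nonneg s)]
    exact mul_le_mul_of_nonneg_right (hF_le s) (abs_nonneg _)
  have hstep7 : (∫ p in Icc (0:ℝ) 1, lam p * Dp (1 - p) ∂μ)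
      = Λ * Dp 1 - ∫ s in Ioc (0:ℝ) 1, F s * d s := by
    rw [← setIntegral_congr_fun measurableSet_Icc hLB]
    rw [hswapB]
    rw [setIntegral_congr_fun measurableSet_Ioc hRB]
    have e : (fun s => (Λ - F s) * d s) = fun s => Λ * d s - F s * d s := by
      funext s
      ring
    rw [e, integral_sub (hd_int'.const_mul Λ) hFd_int, integral_const_mul, hD1]
  -- step 8 : the OIDE sign argument
  have hstep8 : (∫ s in Ioc (0:ℝ) 1, (F s - Λ * Ψc s) * d s) ≤ 0 := by
    apply integral_nonpos_of_ae
    have hsub : Ioc (0:ℝ) 1 ⊆ Icc 0 1 := Ioc_subset_Icc_self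
    have ha1 := ae_restrict_of_ae_restrict_of_subset hsub hOIDE
    have ha2 := ae_restrict_of_ae_restrict_of_subset hsub hbnd
    have ha3 := ae_restrict_of_ae_restrict_of_subset hsub hg_ae
    have ha4 := ae_restrict_of_ae_restrict_of_subset hsub hg0prop
    have ha5 := ae_restrict_mem (μ := volume) (measurableSet_Ioc (a := (0:ℝ)) (b := 1))
    filter_upwards [ha1, ha2, ha3, ha4, ha5] with s hOI hbd hgs hgz hsmem
    simp only [Pi.zero_apply]
    have hsI : s ∈ Icc (0:ℝ) 1 := hsub hsmem
    have hΨcs : Ψc s = Ψ s := by simp only [hΨcdef, hcl_eq s hsI]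
    rw [hPhiC s hsI] at hOI
    rw [hΨcs]
    have hds : d s = g s - g0 s := rfl
    rcases lt_trichotomy (Ψ s) (F s / Λ) with hlt | heq | hgt
    · have hmax : (0:ℝ) ≤ max (-(Ψdd s)) (Ψ s - F s / Λ) := by
        rw [← hOI]
        exact min_le_left _ _
      have hneg : Ψ s - F s / Λ < 0 := by linarith
      have hΨdd0 : Ψdd s = 0 := by
        by_contra hno
        have h2' : -(Ψdd s) < 0 := by
          rcases lt_or_gt_of_ne hno with hlt' | hgt'
          · linarith [hbd.1]
          · linarith
        have := max_lt h2' hneg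
        linarith
      have hg0h : g0 s = h s := by
        rw [hgz.2, hΨdd0, zero_div, sub_zero]
      have hd0 : d s ≤ 0 := by
        rw [hds, hg0h]
        linarith [hgs.2]
      have hfac : 0 < F s - Λ * Ψ s := by
        have h1' := (lt_div_iff₀ hΛpos).mp hlt
        have h2' : Ψ s * Λ = Λ * Ψ s := mul_comm _ _
        linarith
      exact mul_nonpos_iff.mpr (Or.inl ⟨hfac.le, hd0⟩)
    · have hzero : F s - Λ * Ψ s = 0 := by
        rw [heq, mul_div_cancel₀ _ hΛne, sub_self]
      rw [hzero, zero_mul]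
    · have hpos : 0 < Ψ s - F s / Λ := by linarith
      have hmaxpos : 0 < max (-(Ψdd s)) (Ψ s - F s / Λ) :=
        lt_of_lt_of_le hpos (le_max_right _ _)
      have hB0 : 2 * σ * h s - Ψdd s = 0 := by
        rcases min_eq_iff.mp hOI with ⟨ha, _⟩ | ⟨ha, _⟩
        · linarith
        · exact ha
      have hg00 : g0 s = 0 := by
        rw [hgz.2]
        have he2 : Ψdd s = 2 * σ * h s := by linarith
        rw [he2, mul_div_cancel_left₀ _ h2σ.ne', sub_self]
      have hd0 : 0 ≤ d s := by
        rw [hds, hg00]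
        linarith [hgs.1]
      have hfac : F s - Λ * Ψ s < 0 := by
        have h1' := (div_lt_iff₀ hΛpos).mp hgt
        have h2' : Ψ s * Λ = Λ * Ψ s := mul_comm _ _
        linarith
      exact mul_nonpos_iff.mpr (Or.inr ⟨hfac.le, hd0⟩)
  -- final assembly
  have h6' : Λ * (∫ t in (0:ℝ)..1, Pd t * Dp t)
      = Λ * Dp 1 - Λ * ∫ s in Ioc (0:ℝ) 1, Ψc s * d s := by
    rw [hstep6]
    ring
  have hbridge : Λ * (cG - cB) ≤ Λ * (∫ t in (0:ℝ)..1, Pd t * Dp t) :=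
    mul_le_mul_of_nonneg_left hstep5 hΛpos.le
  have hsplit8 : (∫ s in Ioc (0:ℝ) 1, (F s - Λ * Ψc s) * d s)
      = (∫ s in Ioc (0:ℝ) 1, F s * d s) - Λ * ∫ s in Ioc (0:ℝ) 1, Ψc s * d s := by
    have e : (fun s => (F s - Λ * Ψc s) * d s)
        = fun s => F s * d s - Λ * (Ψc s * d s) := by
      funext s
      ring
    rw [e, integral_sub hFd_int (hΨcd_int.const_mul Λ), integral_const_mul]
  rw [hJG, hJB]
  have hcomm : (cG - cB) * Λ = Λ * (cG - cB) := mul_comm _ _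
  linarith [hstep3, hstep4, hstep7, hstep8, hbridge, h6', hsplit8, hcomm]
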